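/- Let A be a Banach algebra with A*A = A* and suppose A has the LW*W-property (for every a ∈ A and net (f_α) ⊆ A*, f_α·a → 0 weak* implies f_α·a → 0 weakly, where ⟨f·a,b⟩=⟨f,ab⟩). Then A is Arens regular. -/

import Mathlib

open Filter Topology ContinuousLinearMap

universe u v

namespace Arens

variable (A : Type u) [NonUnitalNormedRing A] [NormedSpace ℝ A]
  [IsScalarTower ℝ A A] [SMulCommClass ℝ A A]

/-- The bidual of `A`. -/
abbrev Bidual : Type u := (A →L[ℝ] ℝ) →L[ℝ] ℝ

/-- `dotF A f a = f·a`, i.e. `⟨f·a, b⟩ = ⟨f, a*b⟩`, as a bundled bilinear map. -/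
noncomputable def dotF : (A →L[ℝ] ℝ) →L[ℝ] A →L[ℝ] (A →L[ℝ] ℝ) :=
  (((ContinuousLinearMap.compL ℝ A A ℝ).flip).comp (ContinuousLinearMap.mul ℝ A)).flip

/-- `circF A f a = a∘f`, i.e. `⟨a∘f, b⟩ = ⟨f, b*a⟩`, as a bundled bilinear map. -/
noncomputable def circF : (A →L[ℝ] ℝ) →L[ℝ] A →L[ℝ] (A →L[ℝ] ℝ) :=
  (((ContinuousLinearMap.compL ℝ A A ℝ).flip).comp ((ContinuousLinearMap.mul ℝ A).flip)).flip

variable {A}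

/-- `fdot f a = f·a : ⟨f·a, b⟩ = ⟨f, ab⟩`. -/
noncomputable abbrev fdot (f : A →L[ℝ] ℝ) (a : A) : A →L[ℝ] ℝ := dotF A f a

/-- `circ a f = a∘f : ⟨a∘f, b⟩ = ⟨f, ba⟩`. -/
noncomputable abbrev circ (a : A) (f : A →L[ℝ] ℝ) : A →L[ℝ] ℝ := circF A f a

/-- The first Arens product on the bidual: `⟨F·G, f⟩ = ⟨F, G·f⟩` with `⟨G·f, a⟩ = ⟨G, f·a⟩`. -/
noncomputable def arens1 (F G : Bidual A) : Bidual A :=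
  F.comp ((ContinuousLinearMap.compL ℝ A (A →L[ℝ] ℝ) ℝ G).comp (dotF A))

/-- The second Arens product on the bidual: `⟨F∘G, f⟩ = ⟨G, f∘F⟩` with `⟨f∘F, a⟩ = ⟨F, a∘f⟩`. -/
noncomputable def arens2 (F G : Bidual A) : Bidual A :=
  G.comp ((ContinuousLinearMap.compL ℝ A (A →L[ℝ] ℝ) ℝ F).comp (circF A))

variable (A)

/-- The canonical embedding of `A` into its bidual. -/
noncomputable def incl : A →L[ℝ] Bidual A := ContinuousLinearMap.apply ℝ ℝ

variable {A}

/-- A functional `f ∈ A*` is weakly almost periodic iff the two Arens products agree at `f`. -/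
def wap (f : A →L[ℝ] ℝ) : Prop := ∀ F G : Bidual A, arens1 F G f = arens2 F G f

end Arens

namespace Arens

set_option maxHeartbeats 1000000

section AuxLemmas

variable {A : Type u} [NormedAddCommGroup A] [NormedSpace ℝ A]

/-- Ultrafilter limits of a uniformly bounded sequence of functionals exist and
assemble into a continuous linear functional. -/
lemma exists_ultralim {E : Type u} [NormedAddCommGroup E] [NormedSpace ℝ E]
    (w : ℕ → E →L[ℝ] ℝ) (M : ℝ) (hb : ∀ n (e : E), |w n e| ≤ M * ‖e‖) (V : Ultrafilter ℕ) :
    ∃ Λ : E →L[ℝ] ℝ, ∀ e, Tendsto (fun n => w n e) (↑V) (𝓝 (Λ e)) := by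
  have key : ∀ e : E, ∃ c : ℝ, Tendsto (fun n => w n e) (↑V) (𝓝 c) := by
    intro e
    have hcpt : IsCompact (Set.Icc (-(M*‖e‖)) (M*‖e‖)) := isCompact_Icc
    have hmem : ∀ n, w n e ∈ Set.Icc (-(M*‖e‖)) (M*‖e‖) := by
      intro n
      have := abs_le.mp (hb n e)
      exact ⟨this.1, this.2⟩
    obtain ⟨c, _, hle⟩ := hcpt.ultrafilter_le_nhds (V.map (fun n => w n e))
      (le_principal_iff.mpr (Filter.mem_map.mpr (Filter.Eventually.of_forall hmem)))
    rw [Ultrafilter.coe_map] at hle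
    exact ⟨c, hle⟩
  choose c hc using key
  have hlin : IsLinearMap ℝ c := by
    constructor
    · intro e₁ e₂
      have h := hc (e₁ + e₂)
      have heq : (fun n => w n (e₁ + e₂)) = fun n => w n e₁ + w n e₂ := by
        funext n; simp
      rw [heq] at h
      exact tendsto_nhds_unique h ((hc e₁).add (hc e₂))
    · intro r e
      have h := hc (r • e)
      have heq : (fun n => w n (r • e)) = fun n => r * w n e := by
        funext n; simp
      rw [heq] at h
      exact tendsto_nhds_unique h ((hc e).const_mul r)
  refine ⟨LinearMap.mkContinuous (IsLinearMap.mk' c hlin) M ?_, hc⟩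
  intro e
  have habs : Tendsto (fun n => |w n e|) (↑V) (𝓝 |c e|) := (hc e).abs
  have hle : |c e| ≤ M * ‖e‖ :=
    le_of_tendsto habs (Filter.Eventually.of_forall (fun n => hb n e))
  simpa using hle

lemma helly (φ : (A →L[ℝ] ℝ) →L[ℝ] ℝ) (s : Finset (A →L[ℝ] ℝ)) :
    ∃ x : A, ‖x‖ ≤ ‖φ‖ + 1 ∧ ∀ h ∈ s, h x = φ h := by
  classical
  set T : A →L[ℝ] (↥s → ℝ) := ContinuousLinearMap.pi (fun i => (i : A →L[ℝ] ℝ)) with hT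
  set v : ↥s → ℝ := fun i => φ i with hv
  set r : ℝ := ‖φ‖ + 1/2 with hrdef
  have hr : ‖φ‖ < r := by rw [hrdef]; linarith
  have hrpos : 0 < r := lt_of_le_of_lt (norm_nonneg φ) hr
  -- Step A : v is in the closure of the image of the closed ball of radius r
  have hvK : v ∈ closure (T '' Metric.closedBall 0 r) := by
    by_contra hvout
    obtain ⟨ℓ, u, hK, hvgt⟩ := geometric_hahn_banach_closed_point
      (((convex_closedBall (0:A) r).linear_image (T : A →ₗ[ℝ] (↥s → ℝ))).closure)
      isClosed_closure hvout
    set ψ : A →L[ℝ] ℝ := ∑ i : ↥s, ℓ (Pi.single i 1) • (i : A →L[ℝ] ℝ) with hψ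
    have hpisingle : ∀ (i : ↥s) (c : ℝ), Pi.single (M := fun _ : ↥s => ℝ) i c
        = c • Pi.single (M := fun _ : ↥s => ℝ) i 1 := by
      intro i c
      funext j
      by_cases hji : j = i
      · subst hji; simp
      · simp [Pi.single_apply, hji]
    have hsingle : ∀ (z : ↥s → ℝ), ℓ z = ∑ i : ↥s, z i * ℓ (Pi.single i 1) := by
      intro z
      calc ℓ z = ℓ (∑ i : ↥s, Pi.single i (z i)) := by rw [Finset.univ_sum_single]
        _ = ∑ i : ↥s, ℓ (Pi.single i (z i)) := map_sum ℓ _ _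
        _ = ∑ i : ↥s, z i * ℓ (Pi.single i 1) := by
            refine Finset.sum_congr rfl (fun i _ => ?_)
            rw [hpisingle i (z i), map_smul, smul_eq_mul]
    have hψx : ∀ x : A, ℓ (T x) = ψ x := by
      intro x
      rw [hsingle (T x), hψ]
      rw [ContinuousLinearMap.sum_apply]
      refine Finset.sum_congr rfl (fun i _ => ?_)
      have h1 : T x i = (i : A →L[ℝ] ℝ) x := rfl
      rw [ContinuousLinearMap.smul_apply, smul_eq_mul, h1, mul_comm]
    have hψv : ℓ v = φ ψ := by
      rw [hsingle v, hψ, map_sum]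
      refine Finset.sum_congr rfl (fun i _ => ?_)
      have h1 : v i = φ (i : A →L[ℝ] ℝ) := rfl
      rw [map_smul, smul_eq_mul, h1, mul_comm]
    have hball : ∀ x : A, ‖x‖ ≤ r → ψ x < u := by
      intro x hx
      have hmem : T x ∈ closure ((T : A →ₗ[ℝ] (↥s → ℝ)) '' Metric.closedBall 0 r) := by
        apply subset_closure
        exact ⟨x, by simpa [Metric.mem_closedBall, dist_zero_right] using hx, rfl⟩
      have := hK _ hmem
      rwa [hψx] at this
    have hu0 : 0 < u := by
      have := hball 0 (by rw [norm_zero]; exact hrpos.le)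
      simpa using this
    have hψnorm : ‖ψ‖ ≤ u / r := by
      apply ContinuousLinearMap.opNorm_le_bound _ (div_nonneg hu0.le hrpos.le)
      intro x
      rcases eq_or_ne x 0 with rfl | hx0
      · simp
      · have hxn : 0 < ‖x‖ := norm_pos_iff.mpr hx0
        have hnsc : ‖(r / ‖x‖) • x‖ = r := by
          rw [norm_smul, Real.norm_eq_abs, abs_div, abs_of_pos hrpos, abs_of_pos hxn,
            div_mul_cancel₀ _ hxn.ne']
        have h1 : (r / ‖x‖) * ψ x < u := by
          have := hball ((r / ‖x‖) • x) (le_of_eq hnsc)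
          rwa [map_smul, smul_eq_mul] at this
        have h2 : -((r / ‖x‖) * ψ x) < u := by
          have := hball (-((r / ‖x‖) • x)) (by rw [norm_neg]; exact le_of_eq hnsc)
          rwa [map_neg, map_smul, smul_eq_mul] at this
        have habs : (r / ‖x‖) * |ψ x| ≤ u := by
          rcases abs_cases (ψ x) with ⟨he, _⟩ | ⟨he, _⟩
          · rw [he]; exact h1.le
          · rw [he, mul_neg]; linarith
        have hq : r * |ψ x| ≤ u * ‖x‖ := by
          rw [div_mul_eq_mul_div, div_le_iff₀ hxn] at habs
          linarith [habs]
        rw [Real.norm_eq_abs, div_mul_eq_mul_div, le_div_iff₀ hrpos]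
        linarith [hq]
    have hcontr : φ ψ ≤ ‖φ‖ * (u / r) := by
      calc φ ψ ≤ |φ ψ| := le_abs_self _
        _ ≤ ‖φ‖ * ‖ψ‖ := by
            have := φ.le_opNorm ψ
            rwa [Real.norm_eq_abs] at this
        _ ≤ ‖φ‖ * (u / r) := by
            exact mul_le_mul_of_nonneg_left hψnorm (norm_nonneg φ)
    have hlt : ‖φ‖ * (u / r) < u := by
      rw [mul_div_assoc' , div_lt_iff₀ hrpos]
      nlinarith [hu0, hr]
    rw [hψv] at hvgt
    linarith
  -- Step B : exact solution via a bounded right inverse on the (finite-dim) range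
  set R : Submodule ℝ (↥s → ℝ) := LinearMap.range (T : A →ₗ[ℝ] (↥s → ℝ)) with hR
  have hRclosed : IsClosed (R : Set (↥s → ℝ)) := Submodule.closed_of_finiteDimensional R
  have hvR : v ∈ R := by
    have himg : T '' Metric.closedBall 0 r ⊆ (R : Set (↥s → ℝ)) := by
      rintro z ⟨x, -, rfl⟩
      exact ⟨x, rfl⟩
    exact closure_minimal himg hRclosed hvK
  haveI : FiniteDimensional ℝ R := inferInstance
  set b := Module.finBasis ℝ R with hb
  have hbmem : ∀ i, ∃ x : A, T x = (b i : ↥s → ℝ) := fun i => (b i).2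
  choose uu huu using hbmem
  set ζ : R →ₗ[ℝ] A := Module.Basis.constr b ℝ uu with hζ
  have hζsec : ∀ w : R, T (ζ w) = (w : ↥s → ℝ) := by
    have hcomp : (T : A →ₗ[ℝ] (↥s → ℝ)).comp ζ = R.subtype := by
      apply b.ext
      intro i
      simp [hζ, Module.Basis.constr_basis]
      exact huu i
    intro w
    have := congrArg (fun m => m w) hcomp
    simpa using this
  set ζc : R →L[ℝ] A := LinearMap.toContinuousLinearMap ζ with hζc
  set C : ℝ := ‖ζc‖ with hC
  have hC0 : 0 ≤ C := by rw [hC]; exact norm_nonneg ζc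
  have hη : 0 < (1/2) / (C + 1) := by positivity
  obtain ⟨z, hzmem, hzdist⟩ := Metric.mem_closure_iff.mp hvK _ hη
  obtain ⟨x₁, hx₁ball, rfl⟩ := hzmem
  have hx₁ : ‖x₁‖ ≤ r := by
    simpa [Metric.mem_closedBall, dist_zero_right] using hx₁ball
  have hwR : v - T x₁ ∈ R := R.sub_mem hvR ⟨x₁, rfl⟩
  refine ⟨x₁ + ζc ⟨v - T x₁, hwR⟩, ?_, ?_⟩
  · have hnw : ‖(⟨v - T x₁, hwR⟩ : R)‖ < (1/2) / (C + 1) := by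
      have : dist v (T x₁) = ‖v - T x₁‖ := dist_eq_norm _ _
      rw [this] at hzdist
      exact hzdist
    have hbound : ‖ζc ⟨v - T x₁, hwR⟩‖ ≤ C * ((1/2) / (C + 1)) := by
      calc ‖ζc ⟨v - T x₁, hwR⟩‖ ≤ C * ‖(⟨v - T x₁, hwR⟩ : R)‖ := ζc.le_opNorm _
        _ ≤ C * ((1/2) / (C + 1)) := mul_le_mul_of_nonneg_left hnw.le hC0
    have hcc : C * ((1/2) / (C + 1)) ≤ 1/2 := by
      rw [mul_div_assoc']
      rw [div_le_iff₀ (by positivity : (0:ℝ) < C + 1)]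
      nlinarith
    have h12 : ‖ζc ⟨v - T x₁, hwR⟩‖ ≤ 1/2 := le_trans hbound hcc
    calc ‖x₁ + ζc ⟨v - T x₁, hwR⟩‖ ≤ ‖x₁‖ + ‖ζc ⟨v - T x₁, hwR⟩‖ := norm_add_le _ _
      _ ≤ r + 1/2 := add_le_add hx₁ h12
      _ = ‖φ‖ + 1 := by rw [hrdef]; ring
  · intro h hh
    have hTx : T (x₁ + ζc ⟨v - T x₁, hwR⟩) = v := by
      rw [map_add]
      have : T (ζc ⟨v - T x₁, hwR⟩) = v - T x₁ := hζsec ⟨v - T x₁, hwR⟩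
      rw [this]
      abel
    have := congrFun hTx (⟨h, hh⟩ : ↥s)
    simpa [hT, hv, ContinuousLinearMap.pi_apply] using this

private noncomputable def histFun (cX cY : (ℕ → A) → ℕ → A) : ℕ → (ℕ → A) × (ℕ → A)
  | 0 => (fun _ => 0, fun _ => 0)
  | N+1 =>
    let p := histFun cX cY N
    let xs' := Function.update p.1 N (cX p.2 N)
    (xs', Function.update p.2 N (cY xs' N))

/-- Interleaved interpolation sequences. -/
lemma constr_seq (F G : (A →L[ℝ] ℝ) →L[ℝ] ℝ) (ka β : A →L[ℝ] ℝ)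
    (Tc Tf : A → (A →L[ℝ] ℝ)) :
    ∃ x y : ℕ → A, (∀ m, ‖x m‖ ≤ ‖F‖ + 1) ∧ (∀ n, ‖y n‖ ≤ ‖G‖ + 1) ∧
      (∀ m, ka (x m) = F ka) ∧ (∀ n, β (y n) = G β) ∧
      (∀ n m, n < m → (Tc (y n)) (x m) = F (Tc (y n))) ∧
      (∀ m n, m ≤ n → (Tf (x m)) (y n) = G (Tf (x m))) := by
  classical
  let cX : (ℕ → A) → ℕ → A := fun ys m =>
    (helly F (insert ka ((Finset.range m).image fun n => Tc (ys n)))).choose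
  let cY : (ℕ → A) → ℕ → A := fun xs n =>
    (helly G (insert β ((Finset.range (n+1)).image fun m => Tf (xs m)))).choose
  let hist := histFun cX cY
  let x : ℕ → A := fun m => (hist (m+1)).1 m
  let y : ℕ → A := fun m => (hist (m+1)).2 m
  have hsucc : ∀ N, hist (N+1) =
      (Function.update (hist N).1 N (cX (hist N).2 N),
       Function.update (hist N).2 N (cY (Function.update (hist N).1 N (cX (hist N).2 N)) N)) :=
    fun N => rfl
  have hx : ∀ m, x m = cX (hist m).2 m := by
    intro m
    show (hist (m+1)).1 m = _
    rw [hsucc m]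
    simp [Function.update_self]
  have hy : ∀ n, y n = cY (Function.update (hist n).1 n (cX (hist n).2 n)) n := by
    intro n
    show (hist (n+1)).2 n = _
    rw [hsucc n]
    simp [Function.update_self]
  have stable1 : ∀ N m, m < N → (hist N).1 m = x m := by
    intro N
    induction N with
    | zero => intro m hm; omega
    | succ N ih =>
      intro m hm
      rw [hsucc N]
      rcases eq_or_lt_of_le (Nat.lt_succ_iff.mp hm) with rfl | hmN
      · simp only [Function.update_self]
        exact (hx m).symm
      · simp only [Function.update_of_ne (by omega : m ≠ N)]
        exact ih m hmN
  have stable2 : ∀ N m, m < N → (hist N).2 m = y m := by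
    intro N
    induction N with
    | zero => intro m hm; omega
    | succ N ih =>
      intro m hm
      rw [hsucc N]
      rcases eq_or_lt_of_le (Nat.lt_succ_iff.mp hm) with rfl | hmN
      · simp only [Function.update_self]
        exact (hy m).symm
      · simp only [Function.update_of_ne (by omega : m ≠ N)]
        exact ih m hmN
  have xspec : ∀ m, ‖x m‖ ≤ ‖F‖ + 1 ∧
      ∀ h ∈ insert ka ((Finset.range m).image fun n => Tc ((hist m).2 n)), h (x m) = F h := by
    intro m
    rw [hx m]
    exact (helly F _).choose_spec
  have yspec : ∀ n, ‖y n‖ ≤ ‖G‖ + 1 ∧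
      ∀ h ∈ insert β ((Finset.range (n+1)).image
        fun m => Tf ((Function.update (hist n).1 n (cX (hist n).2 n)) m)), h (y n) = G h := by
    intro n
    rw [hy n]
    exact (helly G _).choose_spec
  have hupdx : ∀ n m, m ≤ n → (Function.update (hist n).1 n (cX (hist n).2 n)) m = x m := by
    intro n m hmn
    rcases eq_or_lt_of_le hmn with rfl | hlt
    · rw [Function.update_self]
      exact (hx m).symm
    · rw [Function.update_of_ne (by omega : m ≠ n)]
      exact stable1 n m hlt
  refine ⟨x, y, fun m => (xspec m).1, fun n => (yspec n).1, ?_, ?_, ?_, ?_⟩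
  · intro m
    exact (xspec m).2 ka (Finset.mem_insert_self _ _)
  · intro n
    exact (yspec n).2 β (Finset.mem_insert_self _ _)
  · intro n m hnm
    have hmem : Tc (y n) ∈ insert ka ((Finset.range m).image fun j => Tc ((hist m).2 j)) := by
      apply Finset.mem_insert_of_mem
      apply Finset.mem_image.mpr
      exact ⟨n, Finset.mem_range.mpr hnm, by rw [stable2 m n hnm]⟩
    exact (xspec m).2 _ hmem
  · intro m n hmn
    have hmem : Tf (x m) ∈ insert β ((Finset.range (n+1)).image
        fun j => Tf ((Function.update (hist n).1 n (cX (hist n).2 n)) j)) := by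
      apply Finset.mem_insert_of_mem
      apply Finset.mem_image.mpr
      exact ⟨m, Finset.mem_range.mpr (by omega), by rw [hupdx n m hmn]⟩
    exact (yspec n).2 _ hmem

end AuxLemmas

variable {A : Type u} [NonUnitalNormedRing A] [NormedSpace ℝ A]
  [IsScalarTower ℝ A A] [SMulCommClass ℝ A A] [CompleteSpace A]

/-- If `A*A = A*` and `A` has the `LW*W`-property (for every `a` and net `(f_α)`,
`f_α·a → 0` weak* implies weakly, `⟨f·a, b⟩ = ⟨f, ab⟩`), then `A` is Arens regular. -/
theorem stmt14
    (hfac : ∀ g : A →L[ℝ] ℝ, ∃ (f : A →L[ℝ] ℝ) (a : A), fdot f a = g)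
    (hLW : ∀ (a : A) (ι : Type v) (l : Filter ι), l.NeBot →
      ∀ fa : ι → (A →L[ℝ] ℝ),
        (∀ b : A, Tendsto (fun i => fdot (fa i) a b) l (𝓝 0)) →
        ∀ F : Bidual A, Tendsto (fun i => F (fdot (fa i) a)) l (𝓝 0)) :
    ∀ F G : Bidual A, arens1 F G = arens2 F G := by
  classical
  intro F G
  apply ContinuousLinearMap.ext
  intro f0
  obtain ⟨g, a, rfl⟩ := hfac f0
  set f : A →L[ℝ] ℝ := fdot g a with hfdef
  set k : A →L[ℝ] ℝ := G.comp (dotF A g) with hk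
  set β : A →L[ℝ] ℝ := F.comp (circF A f) with hβ
  -- pointwise identities
  have hfd : ∀ c : A, fdot f c = fdot g (a * c) := by
    intro c; ext d
    show f (c * d) = g ((a * c) * d)
    rw [hfdef]
    show g (a * (c * d)) = g ((a * c) * d)
    rw [mul_assoc]
  have hkapt : ∀ c : A, fdot k a c = G (fdot f c) := by
    intro c
    show k (a * c) = G (fdot f c)
    rw [hfd c]
    rfl
  have harens1 : arens1 F G f = F (fdot k a) := by
    have hka : G.comp (dotF A f) = fdot k a := by
      ext c
      show G (fdot f c) = fdot k a c
      rw [hkapt c]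
    rw [← hka]
    rfl
  have harens2 : arens2 F G f = G β := rfl
  -- the interpolation sequences
  obtain ⟨x, y, hxn, hyn, hxka, hyβ, hxTc, hyTf⟩ :=
    constr_seq F G (fdot k a) β (fun yy => circ yy f) (fun xx => fdot f xx)
  -- the ultrafilter
  set V : Ultrafilter ℕ := Ultrafilter.of atTop with hV
  have hVle : (V : Filter ℕ) ≤ atTop := by rw [hV]; exact Ultrafilter.of_le _
  -- the ultralimit functional k'
  have hwb : ∀ n (c : A), |circ (y n) g c| ≤ (‖circF A g‖ * (‖G‖ + 1)) * ‖c‖ := by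
    intro n c
    have h1 : |(circ (y n) g) c| ≤ ‖circ (y n) g‖ * ‖c‖ := by
      have := (circ (y n) g).le_opNorm c
      rwa [Real.norm_eq_abs] at this
    have h2 : ‖circ (y n) g‖ ≤ ‖circF A g‖ * ‖y n‖ := (circF A g).le_opNorm (y n)
    have h3 : ‖circF A g‖ * ‖y n‖ ≤ ‖circF A g‖ * (‖G‖ + 1) :=
      mul_le_mul_of_nonneg_left (hyn n) (norm_nonneg (circF A g))
    calc |circ (y n) g c| ≤ ‖circ (y n) g‖ * ‖c‖ := h1
      _ ≤ (‖circF A g‖ * (‖G‖ + 1)) * ‖c‖ :=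
          mul_le_mul_of_nonneg_right (h2.trans h3) (norm_nonneg _)
  obtain ⟨k', hk'⟩ := exists_ultralim (fun n => circ (y n) g) (‖circF A g‖ * (‖G‖ + 1)) hwb V
  -- the ultralimit functional Ft
  have hFb : ∀ m (h : A →L[ℝ] ℝ), |(incl A (x m)) h| ≤ (‖F‖ + 1) * ‖h‖ := by
    intro m h
    have h1 : |h (x m)| ≤ ‖h‖ * ‖x m‖ := by
      have := h.le_opNorm (x m)
      rwa [Real.norm_eq_abs] at this
    have h2 : ‖h‖ * ‖x m‖ ≤ ‖h‖ * (‖F‖ + 1) :=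
      mul_le_mul_of_nonneg_left (hxn m) (norm_nonneg _)
    show |h (x m)| ≤ (‖F‖ + 1) * ‖h‖
    calc |h (x m)| ≤ ‖h‖ * (‖F‖ + 1) := h1.trans h2
      _ = (‖F‖ + 1) * ‖h‖ := mul_comm _ _
  obtain ⟨Ft, hFt⟩ := exists_ultralim (E := (A →L[ℝ] ℝ)) (fun m => incl A (x m)) (‖F‖ + 1) hFb V
  -- k' agrees with s := F (fdot k a) at the points a * x m
  have hC2a : ∀ m, k' (a * x m) = F (fdot k a) := by
    intro m
    have h1 : Tendsto (fun n => (circ (y n) g) (a * x m)) (↑V) (𝓝 (k' (a * x m))) := hk' _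
    have h2 : ∀ᶠ n in (V : Filter ℕ), (circ (y n) g) (a * x m) = F (fdot k a) := by
      refine (Filter.Eventually.filter_mono hVle (eventually_ge_atTop m)).mono ?_
      intro n hn
      have e1 : (circ (y n) g) (a * x m) = (fdot f (x m)) (y n) := by
        show g ((a * x m) * y n) = f ((x m) * y n)
        rw [hfdef]
        show g ((a * x m) * y n) = g (a * ((x m) * y n))
        rw [mul_assoc]
      rw [e1, hyTf m n hn, ← hkapt (x m)]
      exact hxka m
    exact tendsto_nhds_unique ((tendsto_congr' h2).mp h1) tendsto_const_nhds
  -- Ft (fdot k' a) = F (fdot k a)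
  have hC2 : Ft (fdot k' a) = F (fdot k a) := by
    have h1 : Tendsto (fun m => (incl A (x m)) (fdot k' a)) (↑V) (𝓝 (Ft (fdot k' a))) := hFt _
    have h2 : (fun m => (incl A (x m)) (fdot k' a)) = fun _ => F (fdot k a) := by
      funext m
      show (fdot k' a) (x m) = F (fdot k a)
      show k' (a * x m) = F (fdot k a)
      exact hC2a m
    rw [h2] at h1
    exact tendsto_nhds_unique h1 tendsto_const_nhds
  -- Ft (circ (y n) f) = G β for each n
  have hC1 : ∀ n, Ft (circ (y n) f) = G β := by
    intro n
    have h1 : Tendsto (fun m => (incl A (x m)) (circ (y n) f)) (↑V) (𝓝 (Ft (circ (y n) f))) :=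
      hFt _
    have h2 : ∀ᶠ m in (V : Filter ℕ), (incl A (x m)) (circ (y n) f) = G β := by
      refine (Filter.Eventually.filter_mono hVle (eventually_gt_atTop n)).mono ?_
      intro m hm
      show (circ (y n) f) (x m) = G β
      rw [hxTc n m hm]
      have e2 : F (circ (y n) f) = β (y n) := rfl
      rw [e2]
      exact hyβ n
    exact tendsto_nhds_unique ((tendsto_congr' h2).mp h1) tendsto_const_nhds
  -- apply the LW*W property along the ultrafilter
  have hmain : G β - F (fdot k a) = 0 := by
    set l : Filter (ULift.{v} ℕ) := Filter.map ULift.up (V : Filter ℕ) with hl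
    haveI hlne : l.NeBot := by
      rw [hl]
      exact Filter.NeBot.map (V.neBot) ULift.up
    set fa : ULift.{v} ℕ → (A →L[ℝ] ℝ) := fun i => circ (y i.down) g - k' with hfa
    have hcond : ∀ b : A, Tendsto (fun i => fdot (fa i) a b) l (𝓝 0) := by
      intro b
      rw [hl, Filter.tendsto_map'_iff]
      have heq : ((fun i => fdot (fa i) a b) ∘ ULift.up)
          = fun n => (circ (y n) g) (a * b) - k' (a * b) := by
        funext n
        show ((circ (y n) g) - k') (a * b) = _
        rw [ContinuousLinearMap.sub_apply]
      rw [heq]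
      have := (hk' (a * b)).sub (tendsto_const_nhds :
          Tendsto (fun _ : ℕ => k' (a * b)) (↑V) (𝓝 (k' (a * b))))
      simpa using this
    have hconc := hLW a (ULift.{v} ℕ) l hlne fa hcond Ft
    rw [hl, Filter.tendsto_map'_iff] at hconc
    have heq2 : ((fun i => Ft (fdot (fa i) a)) ∘ ULift.up)
        = fun _ => G β - F (fdot k a) := by
      funext n
      show Ft (fdot (circ (y n) g - k') a) = _
      have e3 : fdot (circ (y n) g - k') a = circ (y n) f - fdot k' a := by
        ext c
        show ((circ (y n) g) - k') (a * c) = (circ (y n) f - fdot k' a) c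
        rw [ContinuousLinearMap.sub_apply, ContinuousLinearMap.sub_apply]
        congr 1
        show g ((a * c) * y n) = f (c * y n)
        rw [hfdef]
        show g ((a * c) * y n) = g (a * (c * y n))
        rw [mul_assoc]
      rw [e3, map_sub, hC1 n, hC2]
    rw [heq2] at hconc
    exact (tendsto_nhds_unique hconc tendsto_const_nhds).symm
  rw [harens1, harens2]
  linarith [hmain]

end Arens
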